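/- For all x with 0 ≤ x ≤ 1, (π²/4)x / (π/2 + √(1−x²)) ≤ arcsin x ≤ (π/2 + 1)x / (π/2 + √(1−x²)). -/

import Mathlib

/-!
Put `θ = arcsin x ∈ [0, π/2]`, so that `x = sin θ` and `√(1 - x²) = cos θ`; the claim becomes
`π²/4 · sin θ ≤ θ (π/2 + cos θ) ≤ (π/2 + 1) sin θ`, with equality on the right at `θ = 0` and on
the left at `θ = π/2`. Replacing `sin` and `cos` by Taylor polynomials that bound them from the
appropriate side turns both into polynomial inequalities: expanded at `0` for `θ ≤ 1`, and at
`π/2` (in `φ = π/2 - θ ≤ π/2 - 1`) for `θ ≥ 1`, so each tight end is handled by an expansion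
centred there.
-/

open Real Set

theorem le_of_hasDerivAt_le {f g f' g' : ℝ → ℝ} {a x : ℝ}
    (hf : ∀ y, HasDerivAt f (f' y) y) (hg : ∀ y, HasDerivAt g (g' y) y)
    (ha : f a ≤ g a) (h' : ∀ y, a ≤ y → f' y ≤ g' y) (hx : a ≤ x) : f x ≤ g x := by
  have hmono : MonotoneOn (fun y => g y - f y) (Ici a) :=
    monotoneOn_of_hasDerivWithinAt_nonneg (convex_Ici a)
      (fun y _ => ((hg y).sub (hf y)).continuousAt.continuousWithinAt)
      (fun y _ => ((hg y).sub (hf y)).hasDerivWithinAt)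
      (fun y hy => sub_nonneg.2 (h' y (interior_subset hy)))
  linarith [hmono self_mem_Ici hx hx]

namespace Real

theorem cos_le_taylor_four (x : ℝ) : cos x ≤ 1 - x ^ 2 / 2 + x ^ 4 / 24 := by
  have hnonneg : ∀ y, 0 ≤ y → cos y ≤ 1 - y ^ 2 / 2 + y ^ 4 / 24 := fun y hy =>
    le_of_hasDerivAt_le (g' := fun z => -z + z ^ 3 / 6) hasDerivAt_cos
      (fun z => (((hasDerivAt_const z 1).sub ((hasDerivAt_pow 2 z).div_const 2)).add
        ((hasDerivAt_pow 4 z).div_const 24)).congr_deriv (by norm_num; ring))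
      (by simp) (fun z hz => by linarith [sin_ge_sub_cube hz]) hy
  simpa [(show Even 4 by decide).pow_abs] using hnonneg |x| (abs_nonneg x)

theorem sin_le_taylor_five {x : ℝ} (hx : 0 ≤ x) : sin x ≤ x - x ^ 3 / 6 + x ^ 5 / 120 :=
  le_of_hasDerivAt_le (g' := fun y => 1 - y ^ 2 / 2 + y ^ 4 / 24) hasDerivAt_sin
    (fun y => (((hasDerivAt_id y).sub ((hasDerivAt_pow 3 y).div_const 6)).add
      ((hasDerivAt_pow 5 y).div_const 120)).congr_deriv (by norm_num; ring))
    (by simp) (fun y _ => cos_le_taylor_four y) hx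

theorem taylor_six_le_cos (x : ℝ) : 1 - x ^ 2 / 2 + x ^ 4 / 24 - x ^ 6 / 720 ≤ cos x := by
  have hnonneg : ∀ y, 0 ≤ y → 1 - y ^ 2 / 2 + y ^ 4 / 24 - y ^ 6 / 720 ≤ cos y := fun y hy =>
    le_of_hasDerivAt_le (f' := fun z => -z + z ^ 3 / 6 - z ^ 5 / 120)
      (fun z => ((((hasDerivAt_const z 1).sub ((hasDerivAt_pow 2 z).div_const 2)).add
        ((hasDerivAt_pow 4 z).div_const 24)).sub
          ((hasDerivAt_pow 6 z).div_const 720)).congr_deriv (by norm_num; ring))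
      hasDerivAt_cos (by simp) (fun z hz => by linarith [sin_le_taylor_five hz]) hy
  simpa [(show Even 4 by decide).pow_abs, (show Even 6 by decide).pow_abs] using
    hnonneg |x| (abs_nonneg x)


theorem pi_sq_div_four_mul_sin_le_of_le_one {θ : ℝ} (h0 : 0 ≤ θ) (h1 : θ ≤ 1) :
    π ^ 2 / 4 * sin θ ≤ θ * (π / 2 + cos θ) := by
  have := pi_gt_d2
  have := pi_lt_d2
  have hpoly : 0 ≤ π / 2 + 1 - π ^ 2 / 4 - (1 / 2 - π ^ 2 / 24) * θ ^ 2
      + (1 / 24 - π ^ 2 / 480) * θ ^ 4 - θ ^ 6 / 720 := by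
    have hB : 0 ≤ 1 / 2 - π ^ 2 / 24 := by nlinarith
    have hC : 0 ≤ 1 / 24 - π ^ 2 / 480 := by nlinarith
    have hθ2 : θ ^ 2 ≤ 1 := pow_le_one₀ h0 h1
    have hθ6 : θ ^ 6 ≤ 1 := pow_le_one₀ h0 h1
    nlinarith [mul_nonneg hB (sub_nonneg.2 hθ2), mul_nonneg hC (pow_nonneg (sq_nonneg θ) 2)]
  calc π ^ 2 / 4 * sin θ ≤ π ^ 2 / 4 * (θ - θ ^ 3 / 6 + θ ^ 5 / 120) := by
        gcongr; exact sin_le_taylor_five h0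
    _ ≤ θ * (π / 2 + (1 - θ ^ 2 / 2 + θ ^ 4 / 24 - θ ^ 6 / 720)) := by
        nlinarith [mul_nonneg h0 hpoly]
    _ ≤ θ * (π / 2 + cos θ) := by gcongr; exact taylor_six_le_cos θ

theorem mul_pi_div_two_add_cos_le_of_le_one {θ : ℝ} (h0 : 0 ≤ θ) (h1 : θ ≤ 1) :
    θ * (π / 2 + cos θ) ≤ (π / 2 + 1) * sin θ := by
  have := pi_gt_d2
  have := pi_lt_d2
  calc θ * (π / 2 + cos θ) ≤ θ * (π / 2 + (1 - θ ^ 2 / 2 + θ ^ 4 / 24)) := by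
        gcongr; exact cos_le_taylor_four θ
    _ ≤ (π / 2 + 1) * (θ - θ ^ 3 / 6) := by
        have hθ2 : θ ^ 2 ≤ 1 := pow_le_one₀ h0 h1
        nlinarith [mul_nonneg (pow_nonneg h0 3) (sub_nonneg.2 hθ2), pow_nonneg h0 3]
    _ ≤ (π / 2 + 1) * sin θ := by gcongr; exact sin_ge_sub_cube h0

theorem pi_sq_div_four_mul_cos_le {φ : ℝ} (h0 : 0 ≤ φ) (h1 : φ ≤ π / 2 - 1) :
    π ^ 2 / 4 * cos φ ≤ (π / 2 - φ) * (π / 2 + sin φ) := by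
  have := pi_gt_d2
  have := pi_lt_d2
  have hpoly : 0 ≤ π ^ 2 / 8 - 1 - π * φ / 12 + (1 / 6 - π ^ 2 / 96) * φ ^ 2 := by
    nlinarith [mul_nonneg (by nlinarith : (0 : ℝ) ≤ 1 / 6 - π ^ 2 / 96) (sq_nonneg φ)]
  calc π ^ 2 / 4 * cos φ ≤ π ^ 2 / 4 * (1 - φ ^ 2 / 2 + φ ^ 4 / 24) := by
        gcongr; exact cos_le_taylor_four φ
    _ ≤ (π / 2 - φ) * (π / 2 + (φ - φ ^ 3 / 6)) := by
        nlinarith [mul_nonneg (sq_nonneg φ) hpoly]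
    _ ≤ (π / 2 - φ) * (π / 2 + sin φ) := by
        gcongr
        · linarith
        · exact sin_ge_sub_cube h0

theorem pi_div_two_sub_mul_pi_div_two_add_sin_le {φ : ℝ} (h0 : 0 ≤ φ) (h1 : φ ≤ π / 2 - 1) :
    (π / 2 - φ) * (π / 2 + sin φ) ≤ (π / 2 + 1) * cos φ := by
  have := pi_gt_d4
  have hπ := pi_lt_d4
  have hφ : φ ≤ 0.5708 := by linarith
  calc (π / 2 - φ) * (π / 2 + sin φ)
        ≤ (π / 2 - φ) * (π / 2 + (φ - φ ^ 3 / 6 + φ ^ 5 / 120)) := by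
        gcongr
        · linarith
        · exact sin_le_taylor_five h0
    _ ≤ (π / 2 + 1) * (1 - φ ^ 2 / 2) := by
        have h3 : 0 ≤ φ ^ 3 * (π / 12 - φ / 6) := mul_nonneg (pow_nonneg h0 3) (by linarith)
        have h2 : φ ^ 2 ≤ 0.5708 ^ 2 := pow_le_pow_left₀ h0 hφ 2
        have h5 : φ ^ 5 ≤ 0.5708 ^ 5 := pow_le_pow_left₀ h0 hφ 5
        nlinarith [pow_nonneg h0 6, mul_le_mul_of_nonneg_left h5 (by linarith : 0 ≤ π),
          mul_nonneg (sq_nonneg φ) (by linarith : (0 : ℝ) ≤ 0.2854 - (π / 4 - 1 / 2)),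
          mul_le_mul_of_nonneg_left hπ.le (by linarith : 0 ≤ π)]
    _ ≤ (π / 2 + 1) * cos φ := by gcongr; exact one_sub_sq_div_two_le_cos

theorem pi_sq_div_four_mul_sin_le {θ : ℝ} (h0 : 0 ≤ θ) (h1 : θ ≤ π / 2) :
    π ^ 2 / 4 * sin θ ≤ θ * (π / 2 + cos θ) := by
  rcases le_total θ 1 with hθ | hθ
  · exact pi_sq_div_four_mul_sin_le_of_le_one h0 hθ
  · have := pi_sq_div_four_mul_cos_le (φ := π / 2 - θ) (by linarith) (by linarith)
    rwa [cos_pi_div_two_sub, sin_pi_div_two_sub, sub_sub_cancel] at this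

theorem mul_pi_div_two_add_cos_le {θ : ℝ} (h0 : 0 ≤ θ) (h1 : θ ≤ π / 2) :
    θ * (π / 2 + cos θ) ≤ (π / 2 + 1) * sin θ := by
  rcases le_total θ 1 with hθ | hθ
  · exact mul_pi_div_two_add_cos_le_of_le_one h0 hθ
  · have := pi_div_two_sub_mul_pi_div_two_add_sin_le (φ := π / 2 - θ) (by linarith) (by linarith)
    rwa [cos_pi_div_two_sub, sin_pi_div_two_sub, sub_sub_cancel] at this

end Real

theorem stmt_15 (x : ℝ) (hx : 0 ≤ x) (hx1 : x ≤ 1) :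
    (Real.pi ^ 2 / 4) * x / (Real.pi / 2 + Real.sqrt (1 - x ^ 2)) ≤ Real.arcsin x ∧
    Real.arcsin x ≤ (Real.pi / 2 + 1) * x / (Real.pi / 2 + Real.sqrt (1 - x ^ 2)) := by
  have hθ0 : 0 ≤ arcsin x := arcsin_nonneg.2 hx
  have hθ1 : arcsin x ≤ π / 2 := arcsin_le_pi_div_two x
  have hsin : sin (arcsin x) = x := sin_arcsin (by linarith) hx1
  have hD : 0 < π / 2 + √(1 - x ^ 2) := by positivity
  have hlower := pi_sq_div_four_mul_sin_le hθ0 hθ1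
  have hupper := mul_pi_div_two_add_cos_le hθ0 hθ1
  rw [hsin, cos_arcsin] at hlower hupper
  exact ⟨(div_le_iff₀ hD).2 (by linarith), (le_div_iff₀ hD).2 (by linarith)⟩
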